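/- arXiv:2506.05037 — 3 statements merged into one kernel-verified Lean document; each statement's English description precedes it below -/
import Mathlib

section
/- Let 0 < s ≤ 1 and 0 < p < ∞, and let u ∈ M^{s,p}(X) = Ṁ^{s,p}(X) ∩ L^p(X) be an M^{s,p}-quasicontinuous function. Then for every O ∈ X there is a set E(O) ⊂ X that is (s,p)-thin at infinity such that lim_{d(x,O)→∞, x ∈ X∖E(O)} u(x) = 0. -/
/-!
Since `|u|^p + g^p` is integrable, its integral outside `B(O, ρ)` tends to zero. Choose radii
`R k ≥ k` so large that `(k+1)^p` times this tail outside `B(O, R k/(k+1))` is at most `2^{-k}`,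
and let `E(O)` consist of the points beyond some `R k` where `|u| > 1/(k+1)`. Off `E(O)` we have
`|u| ≤ 1/(k+1)` beyond `R k`, which gives the limit.

For thinness, let `K` be the largest index with `R K ≤ κ r`. Then `(K+1)|u|` is a test function
for `E(O) ∩ A_r`, and reverse doubling makes `diam(ΛA_r)` comparable to `r`, so for large `r`
the relative capacity is at most `(K+1)^p` times the energy of `ΛA_r`. These weights assemble
into a single density which, by the choice of the radii, still has finite integral against the
energy, and the enlarged annuli `ΛA_{κ^j}` overlap boundedly; so the tail sums of capacities are
bounded by tails of a finite measure.
-/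

open MeasureTheory Metric Set Filter
open scoped ENNReal NNReal Topology

noncomputable section
namespace Paper

variable {X : Type*} [MetricSpace X] [MeasurableSpace X]

/-- The median `m_u(E)` of a function `u` over a set `E`. -/
def median (μ : Measure X) (u : X → ℝ) (E : Set X) : ℝ :=
  sInf {a : ℝ | μ {x | x ∈ E ∧ a < u x} < μ E / 2}

/-- `g` is an `s`-gradient of `u` (with respect to `μ`). -/
def IsSGradient (μ : Measure X) (s : ℝ) (u : X → ℝ) (g : X → ℝ≥0∞) : Prop :=
  Measurable g ∧ ∃ N : Set X, μ N = 0 ∧ ∀ x ∉ N, ∀ y ∉ N,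
    ENNReal.ofReal |u x - u y| ≤ ENNReal.ofReal (dist x y ^ s) * (g x + g y)

/-- The `p`-th power of the `L^p` quasinorm of `u : X → ℝ` restricted to `F`. -/
def lpNormP (μ : Measure X) (p : ℝ) (u : X → ℝ) (F : Set X) : ℝ≥0∞ :=
  ∫⁻ x in F, ENNReal.ofReal |u x| ^ p ∂μ

/-- Membership in the homogeneous Hajłasz–Sobolev space `Ṁ^{s,p}(X)`:
`u` is measurable (hence finite everywhere, being real valued) and has an
`s`-gradient in `L^p`. -/
def MemHomHajlasz (μ : Measure X) (s p : ℝ) (u : X → ℝ) : Prop :=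
  Measurable u ∧ ∃ g : X → ℝ≥0∞, IsSGradient μ s u g ∧ (∫⁻ x, g x ^ p ∂μ) < ⊤

/-- The homogeneous Hajłasz quasi-seminorm `‖u‖_{Ṁ^{s,p}}`. -/
def hajlaszSeminorm (μ : Measure X) (s p : ℝ) (u : X → ℝ) : ℝ≥0∞ :=
  ⨅ (g : X → ℝ≥0∞) (_ : IsSGradient μ s u g), (∫⁻ x, g x ^ p ∂μ) ^ (1 / p)

/-- The quasi-seminorm `‖u‖_{M^{s,p}} = ‖u‖_{L^p} + ‖u‖_{Ṁ^{s,p}}`. -/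
def hajlaszNorm (μ : Measure X) (s p : ℝ) (u : X → ℝ) : ℝ≥0∞ :=
  lpNormP μ p u Set.univ ^ (1 / p) + hajlaszSeminorm μ s p u

/-- The capacity `Cap_{M^{s,p}}(E)`; the infimum over the empty set is `⊤ = ∞`. -/
def hajlaszCapacity (μ : Measure X) (s p : ℝ) (E : Set X) : ℝ≥0∞ :=
  ⨅ (u : X → ℝ) (_ : MemHomHajlasz μ s p u ∧ lpNormP μ p u Set.univ < ⊤ ∧
      ∃ U : Set X, IsOpen U ∧ E ⊆ U ∧ ∀ x ∈ U, 1 ≤ u x),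
    hajlaszNorm μ s p u ^ p

/-- `M^{s,p}`-quasicontinuity of `u`. -/
def HajlaszQC (μ : Measure X) (s p : ℝ) (u : X → ℝ) : Prop :=
  ∀ ε : ℝ, 0 < ε → ∃ E : Set X,
    hajlaszCapacity μ s p E < ENNReal.ofReal ε ∧ ContinuousOn u Eᶜ

/-- The variational relative capacity `cap_{s,p}(E,F)`. -/
def relCap (μ : Measure X) (s p : ℝ) (E F : Set X) : ℝ≥0∞ :=
  ⨅ (v : X → ℝ) (_ : MemHomHajlasz μ s p v ∧ HajlaszQC μ s p v ∧ ∀ x ∈ E, 1 ≤ v x),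
    (lpNormP μ p v F / ENNReal.ofReal (Metric.diam F ^ (s * p)) +
      ⨅ (g : X → ℝ≥0∞) (_ : IsSGradient μ s v g), ∫⁻ x in F, g x ^ p ∂μ)

/-- The annulus `A_r(O) = B(O, κ r) \ B(O, r)`. -/
def ann (κ : ℝ) (O : X) (r : ℝ) : Set X := ball O (κ * r) \ ball O r

/-- The enlarged annulus `Λ A_r(O) = B(O, Λ κ r) \ B(O, r / Λ)`. -/
def annL (κ Λ : ℝ) (O : X) (r : ℝ) : Set X := ball O (Λ * (κ * r)) \ ball O (r / Λ)

/-- `E` is `(s,p)`-thin at infinity with respect to the basepoint `O`. -/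
def ThinAtInfinity (μ : Measure X) (s p κ : ℝ) (O : X) (E : Set X) : Prop :=
  ∀ Λ : ℝ, 1 < Λ →
    Tendsto (fun m : ℕ =>
        ∑' j : ℕ, relCap μ s p (E ∩ ann κ O (κ ^ (m + j))) (annL κ Λ O (κ ^ (m + j))))
      atTop (𝓝 0)

/-- `u(x) → c` as `d(x,O) → ∞` along `x ∈ X \ E`. -/
def TendstoOutside (O : X) (E : Set X) (u : X → ℝ) (c : ℝ) : Prop :=
  ∀ ε : ℝ, 0 < ε → ∃ N : ℕ, ∀ x : X, x ∉ E → (N : ℝ) < dist x O → |u x - c| < ε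

/-- The `ρ`-restricted Hausdorff content of codimension `d`, where the infimum runs
over all finite or countable coverings of `E` by balls of positive radii at most `ρ`. -/
def hContent (μ : Measure X) (d : ℝ) (ρ : ℝ≥0∞) (E : Set X) : ℝ≥0∞ :=
  ⨅ (c : ℕ → X) (r : ℕ → ℝ) (J : Set ℕ)
    (_ : (∀ j ∈ J, 0 < r j ∧ ENNReal.ofReal (r j) ≤ ρ) ∧
        E ⊆ ⋃ j ∈ J, ball (c j) (r j)),
    ∑' j : J, μ (ball (c (j : ℕ)) (r (j : ℕ))) / ENNReal.ofReal (r (j : ℕ) ^ d)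

/-- The homogeneous fractional Sobolev quasinorm `‖u‖_{Ẇ^{s,p}_q}`. -/
def fracNorm (μ : Measure X) (s p q : ℝ) (u : X → ℝ) : ℝ≥0∞ :=
  (∫⁻ x, (∫⁻ y, ENNReal.ofReal |u x - u y| ^ q /
      (ENNReal.ofReal (dist x y ^ (s * q)) * μ (ball x (dist x y))) ∂μ) ^ (p / q) ∂μ) ^ (1 / p)

/-- Membership in the homogeneous fractional Sobolev space `Ẇ^{s,p}_q(X)`. -/
def MemFrac (μ : Measure X) (s p q : ℝ) (u : X → ℝ) : Prop :=
  Measurable u ∧ fracNorm μ s p q u < ⊤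

/-- The capacity `Cap_{W^{s,p}_q}(E)`; the infimum over the empty set is `⊤ = ∞`. -/
def fracCapacity (μ : Measure X) (s p q : ℝ) (E : Set X) : ℝ≥0∞ :=
  ⨅ (u : X → ℝ) (_ : MemFrac μ s p q u ∧ lpNormP μ p u Set.univ < ⊤ ∧
      ∃ U : Set X, IsOpen U ∧ E ⊆ U ∧ ∀ x ∈ U, 1 ≤ u x),
    (lpNormP μ p u Set.univ ^ (1 / p) + fracNorm μ s p q u) ^ p

/-- `W^{s,p}_q`-quasicontinuity of `u`. -/
def FracQC (μ : Measure X) (s p q : ℝ) (u : X → ℝ) : Prop :=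
  ∀ ε : ℝ, 0 < ε → ∃ E : Set X,
    fracCapacity μ s p q E < ENNReal.ofReal ε ∧ ContinuousOn u Eᶜ

end Paper

namespace Paper

section Energy

variable {α : Type*} [MeasurableSpace α] {μ : Measure α} {p : ℝ}

theorem lintegral_ofReal_mul_rpow (hp : 0 ≤ p)
    {f : α → ℝ≥0∞} (hf : Measurable f) (c : ℝ) (F : Set α) :
    ∫⁻ x in F, (ENNReal.ofReal c * f x) ^ p ∂μ = ENNReal.ofReal c ^ p * ∫⁻ x in F, f x ^ p ∂μ := by
  simp_rw [ENNReal.mul_rpow_of_nonneg _ _ hp]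
  exact lintegral_const_mul _ (hf.pow_const p)

theorem lpNormP_const_mul_abs (hp : 0 ≤ p)
    {f : α → ℝ} (hf : Measurable f) {c : ℝ} (hc : 0 ≤ c) (F : Set α) :
    lpNormP μ p (fun x => c * |f x|) F = ENNReal.ofReal c ^ p * lpNormP μ p f F := by
  simp_rw [lpNormP, abs_mul, abs_abs, abs_of_nonneg hc, ENNReal.ofReal_mul hc]
  exact lintegral_ofReal_mul_rpow hp hf.abs.ennreal_ofReal c F

def energyMeasure (μ : Measure α) (p : ℝ) (u : α → ℝ) (g : α → ℝ≥0∞) : Measure α :=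
  μ.withDensity fun x => ENNReal.ofReal |u x| ^ p + g x ^ p

theorem energyMeasure_apply {u : α → ℝ} (hu : Measurable u) (g : α → ℝ≥0∞) {F : Set α}
    (hF : MeasurableSet F) :
    energyMeasure μ p u g F = lpNormP μ p u F + ∫⁻ x in F, g x ^ p ∂μ := by
  rw [energyMeasure, withDensity_apply _ hF,
    lintegral_add_left (hu.abs.ennreal_ofReal.pow_const p), lpNormP]

theorem isFiniteMeasure_energyMeasure {u : α → ℝ} (hu : Measurable u)
    (huLp : lpNormP μ p u univ < ⊤) {g : α → ℝ≥0∞} (hgp : ∫⁻ x, g x ^ p ∂μ < ⊤) :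
    IsFiniteMeasure (energyMeasure μ p u g) := by
  constructor
  rw [energyMeasure_apply hu g MeasurableSet.univ, setLIntegral_univ]
  exact ENNReal.add_lt_top.2 ⟨huLp, hgp⟩

end Energy

section Hajlasz

variable {X : Type*} [MetricSpace X] [MeasurableSpace X] {μ : Measure X} {s p : ℝ} {u : X → ℝ}
  {g : X → ℝ≥0∞}

theorem IsSGradient.const_mul_abs (hg : IsSGradient μ s u g) {c : ℝ} (hc : 0 ≤ c) :
    IsSGradient μ s (fun x => c * |u x|) (fun x => ENNReal.ofReal c * g x) := by
  obtain ⟨hgm, N, hN, hgN⟩ := hg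
  refine ⟨hgm.const_mul _, N, hN, fun x hx y hy => ?_⟩
  calc ENNReal.ofReal (abs (c * |u x| - c * |u y|))
      = ENNReal.ofReal c * ENNReal.ofReal |(|u x| - |u y|)| := by
        rw [← mul_sub, abs_mul, abs_of_nonneg hc, ENNReal.ofReal_mul hc]
    _ ≤ ENNReal.ofReal c * ENNReal.ofReal |u x - u y| :=
        mul_le_mul_right (ENNReal.ofReal_le_ofReal (abs_abs_sub_abs_le_abs_sub _ _)) _
    _ ≤ ENNReal.ofReal c * (ENNReal.ofReal (dist x y ^ s) * (g x + g y)) := by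
        gcongr; exact hgN x hx y hy
    _ = ENNReal.ofReal (dist x y ^ s) * (ENNReal.ofReal c * g x + ENNReal.ofReal c * g y) := by
        ring

theorem HajlaszQC.const_mul_abs (hu : HajlaszQC μ s p u) (c : ℝ) :
    HajlaszQC μ s p (fun x => c * |u x|) := fun ε hε =>
  let ⟨E, hE, hcont⟩ := hu ε hε
  ⟨E, hE, continuousOn_const.mul hcont.abs⟩

theorem relCap_le_of_one_le_mul_abs (hp : 0 ≤ p) (hu : Measurable u) (hg : IsSGradient μ s u g)
    (hgp : ∫⁻ x, g x ^ p ∂μ < ⊤) (huqc : HajlaszQC μ s p u) {c : ℝ} (hc : 0 ≤ c) {E F : Set X}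
    (hE : ∀ x ∈ E, 1 ≤ c * |u x|) :
    relCap μ s p E F ≤ ENNReal.ofReal c ^ p *
      (lpNormP μ p u F / ENNReal.ofReal (diam F ^ (s * p)) + ∫⁻ x in F, g x ^ p ∂μ) := by
  have hgc := hg.const_mul_abs hc
  have hmem : MemHomHajlasz μ s p (fun x => c * |u x|) := by
    refine ⟨hu.abs.const_mul c, _, hgc, ?_⟩
    rw [← setLIntegral_univ, lintegral_ofReal_mul_rpow hp hg.1 c, setLIntegral_univ]
    exact ENNReal.mul_lt_top (ENNReal.rpow_lt_top_of_nonneg hp ENNReal.ofReal_ne_top) hgp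
  refine (iInf₂_le _ ⟨hmem, huqc.const_mul_abs c, hE⟩).trans ?_
  rw [lpNormP_const_mul_abs hp hu hc, mul_add, mul_div_assoc,
    ← lintegral_ofReal_mul_rpow hp hg.1 c F]
  gcongr
  exact iInf₂_le _ hgc

end Hajlasz

section Annuli

variable {X : Type*} [MetricSpace X]

theorem lt_add_of_mem_annL_pow {κ Λ : ℝ} (hκ : 1 < κ) (hΛ : 0 < Λ) {C : ℕ}
    (hC : Λ * Λ * κ ≤ κ ^ C) {O x : X} {i j : ℕ} (hi : x ∈ annL κ Λ O (κ ^ i))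
    (hj : x ∈ annL κ Λ O (κ ^ j)) : j < i + C := by
  simp only [annL, Set.mem_sdiff, mem_ball, not_lt] at hi hj
  refine (pow_lt_pow_iff_right₀ hκ).1 ?_
  calc κ ^ j ≤ Λ * dist x O := by rw [div_le_iff₀ hΛ] at hj; linarith [hj.2]
    _ < Λ * (Λ * (κ * κ ^ i)) := mul_lt_mul_of_pos_left hi.1 hΛ
    _ = Λ * Λ * κ * κ ^ i := by ring
    _ ≤ κ ^ C * κ ^ i := by gcongr
    _ = κ ^ (i + C) := by ring

theorem tsum_indicator_annL_le {κ Λ : ℝ} (hκ : 1 < κ) (hΛ : 0 < Λ) {C : ℕ}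
    (hC : Λ * Λ * κ ≤ κ ^ C) (O : X) (m : ℕ) (x : X) :
    ∑' j, (annL κ Λ O (κ ^ (m + j))).indicator (1 : X → ℝ≥0∞) x ≤
      C * (ball O (κ ^ m / Λ))ᶜ.indicator 1 x := by
  set A := fun j : ℕ => annL κ Λ O (κ ^ (m + j))
  set B := (ball O (κ ^ m / Λ))ᶜ
  classical
  by_cases hex : ∃ j, x ∈ A j
  · have hfar : x ∈ B := by
      have hx := (Nat.find_spec hex).2
      simp only [A, mem_ball, not_lt] at hx
      simp only [B, mem_compl_iff, mem_ball, not_lt]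
      refine le_trans ?_ hx
      gcongr
      · exact hκ.le
      · omega
    rw [indicator_of_mem hfar, Pi.one_apply, mul_one]
    calc ∑' j, (A j).indicator 1 x
        = ∑ j ∈ Finset.Ico (Nat.find hex) (Nat.find hex + C), (A j).indicator 1 x := by
          refine tsum_eq_sum fun j hj => indicator_of_notMem (fun hx => hj ?_) _
          have := lt_add_of_mem_annL_pow hκ hΛ hC (Nat.find_spec hex) hx
          exact Finset.mem_Ico.2 ⟨Nat.find_min' hex hx, by omega⟩
      _ ≤ ∑ _j ∈ Finset.Ico (Nat.find hex) (Nat.find hex + C), (1 : ℝ≥0∞) :=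
          Finset.sum_le_sum fun j _ => indicator_le_self' (fun _ _ => zero_le) x
      _ = C := by simp
  · simp only [not_exists, A] at hex
    simp [indicator_of_notMem (hex _)]

variable [MeasurableSpace X]

theorem ann_nonempty {μ : Measure X}
    (hball : ∀ (x : X) (r : ℝ), 0 < r → 0 < μ (ball x r) ∧ μ (ball x r) < ⊤) {cR κ : ℝ}
    (hcR1 : cR < 1)
    (hrev : ∀ (x : X) (r : ℝ), 0 < r → μ (ball x r) ≤ ENNReal.ofReal cR * μ (ball x (κ * r)))
    (hκ : 0 < κ) (x : X) {r : ℝ} (hr : 0 < r) : (ann κ x r).Nonempty := by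
  rw [ann, sdiff_nonempty]
  intro hsub
  obtain ⟨hpos, hfin⟩ := hball x (κ * r) (mul_pos hκ hr)
  have hlt : ENNReal.ofReal cR * μ (ball x (κ * r)) < μ (ball x (κ * r)) :=
    (ENNReal.mul_lt_mul_left hpos.ne' hfin.ne (ENNReal.ofReal_lt_one.mpr hcR1)).trans_eq
      (one_mul _)
  exact (measure_mono hsub).not_gt (hlt.trans_le' (hrev x r hr))

theorem le_diam_annL {μ : Measure X}
    (hball : ∀ (x : X) (r : ℝ), 0 < r → 0 < μ (ball x r) ∧ μ (ball x r) < ⊤) {cR κ : ℝ}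
    (hcR1 : cR < 1)
    (hrev : ∀ (x : X) (r : ℝ), 0 < r → μ (ball x r) ≤ ENNReal.ofReal cR * μ (ball x (κ * r)))
    (hκ : 1 ≤ κ) {Λ r : ℝ} (hΛ : 1 < Λ) (hr : 0 < r) (O : X) :
    (Λ - 1) * r / (Λ * κ) ≤ diam (annL κ Λ O r) := by
  have hκ0 : 0 < κ := zero_lt_one.trans_le hκ
  have hΛ0 : 0 < Λ := zero_lt_one.trans hΛ
  set t := (Λ - 1) * r / (Λ * κ)
  have hκt : κ * t = r - r / Λ := by simp only [t]; field_simp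
  have ht : 0 < t := by simp only [t]; have := sub_pos.2 hΛ; positivity
  have hrΛ : r / Λ < r := div_lt_self hr hΛ
  obtain ⟨z, hzκ, hz⟩ := ann_nonempty hball hcR1 hrev hκ0 O hr
  obtain ⟨w, hwκ, hw⟩ := ann_nonempty hball hcR1 hrev hκ0 z ht
  simp only [mem_ball, not_lt] at hzκ hz hwκ hw
  have hΛκ : κ * r + κ * t ≤ Λ * (κ * r) := by
    have h1 : r - r / Λ = (Λ - 1) * (r / Λ) := by field_simp
    have h2 : r / Λ ≤ κ * r := (div_le_self hr.le hΛ.le).trans (le_mul_of_one_le_left hr.le hκ)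
    nlinarith [mul_le_mul_of_nonneg_left h2 (sub_pos.2 hΛ).le]
  have hzF : z ∈ annL κ Λ O r := by
    simp only [annL, Set.mem_sdiff, mem_ball, not_lt]
    constructor <;> nlinarith
  have hwF : w ∈ annL κ Λ O r := by
    simp only [annL, Set.mem_sdiff, mem_ball, not_lt]
    constructor
    · linarith [dist_triangle w z O]
    · linarith [dist_triangle_left z O w, dist_comm w z]
  calc t ≤ dist w z := hw
    _ ≤ diam (annL κ Λ O r) :=
      dist_le_diam_of_mem (isBounded_ball.subset sdiff_subset) hwF hzF

variable [OpensMeasurableSpace X]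

theorem tendsto_measure_compl_ball_atTop (ν : Measure X) [IsFiniteMeasure ν] (O : X) :
    Tendsto (fun ρ : ℝ => ν (ball O ρ)ᶜ) atTop (𝓝 0) := by
  have hanti : Antitone fun ρ : ℝ => (ball O ρ)ᶜ := fun _ _ h =>
    compl_subset_compl.mpr (ball_subset_ball h)
  have hempty : ⋂ ρ : ℝ, (ball O ρ)ᶜ = ∅ := by
    rw [← compl_iUnion, compl_empty_iff, ← univ_subset_iff, ← iUnion_ball_nat O]
    exact iUnion_subset fun n => subset_iUnion (fun ρ : ℝ => ball O ρ) n
  have h := tendsto_measure_iInter_atTop (μ := ν)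
    (fun _ => measurableSet_ball.compl.nullMeasurableSet) hanti ⟨0, measure_ne_top ν _⟩
  rwa [hempty, measure_empty] at h

theorem tsum_measure_annL_le (ν : Measure X) {κ Λ : ℝ} (hκ : 1 < κ) (hΛ : 0 < Λ) {C : ℕ}
    (hC : Λ * Λ * κ ≤ κ ^ C) (O : X) (m : ℕ) :
    ∑' j, ν (annL κ Λ O (κ ^ (m + j))) ≤ C * ν (ball O (κ ^ m / Λ))ᶜ := by
  set A := fun j : ℕ => annL κ Λ O (κ ^ (m + j))
  set B := (ball O (κ ^ m / Λ))ᶜ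
  have hA : ∀ j, MeasurableSet (A j) := fun _ => measurableSet_ball.diff measurableSet_ball
  have hB : MeasurableSet B := measurableSet_ball.compl
  have hpt := tsum_indicator_annL_le hκ hΛ hC O m
  calc ∑' j, ν (A j) = ∑' j, ∫⁻ x, (A j).indicator 1 x ∂ν := by
        simp only [lintegral_indicator_one (hA _)]
    _ = ∫⁻ x, ∑' j, (A j).indicator 1 x ∂ν :=
        (lintegral_tsum fun j => (measurable_one.indicator (hA j)).aemeasurable).symm
    _ ≤ ∫⁻ x, C * B.indicator 1 x ∂ν := lintegral_mono hpt
    _ = C * ν B := by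
        rw [lintegral_const_mul _ (measurable_one.indicator hB), lintegral_indicator_one hB]

end Annuli

section Levels

/-- The largest `k` with `R k ≤ t`, with junk value `0` if there is none; the search bound
`⌈t⌉₊` loses nothing as soon as `k ≤ R k` for all `k`. -/
def levelIndex (R : ℕ → ℝ) (t : ℝ) : ℕ := Nat.findGreatest (fun k => R k ≤ t) ⌈t⌉₊

variable {X : Type*} [MetricSpace X] {R : ℕ → ℝ}

theorem le_levelIndex (hR : ∀ k : ℕ, (k : ℝ) ≤ R k) {k : ℕ} {t : ℝ} (hk : R k ≤ t) :
    k ≤ levelIndex R t :=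
  Nat.le_findGreatest (by exact_mod_cast ((hR k).trans hk).trans (Nat.le_ceil t)) hk

theorem levelIndex_spec {t : ℝ} (h : levelIndex R t ≠ 0) : R (levelIndex R t) ≤ t :=
  Nat.findGreatest_of_ne_zero rfl h

theorem levelIndex_mono (hR : ∀ k : ℕ, (k : ℝ) ≤ R k) : Monotone (levelIndex R) := by
  intro t t' htt'
  by_cases h : levelIndex R t = 0
  · rw [h]; exact Nat.zero_le _
  · exact le_levelIndex hR ((levelIndex_spec h).trans htt')

def exceptionalSet (R : ℕ → ℝ) (u : X → ℝ) (O : X) : Set X :=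
  ⋃ k : ℕ, {x | R k ≤ dist x O ∧ 1 / ((k : ℝ) + 1) < |u x|}

theorem tendstoOutside_exceptionalSet (R : ℕ → ℝ) (u : X → ℝ) (O : X) :
    TendstoOutside O (exceptionalSet R u O) u 0 := by
  intro ε hε
  obtain ⟨k, hk⟩ := exists_nat_one_div_lt hε
  obtain ⟨N, hN⟩ := exists_nat_ge (R k)
  refine ⟨N, fun x hx hxN => ?_⟩
  have hxk : ¬(R k ≤ dist x O ∧ 1 / ((k : ℝ) + 1) < |u x|) := fun h => hx (mem_iUnion.2 ⟨k, h⟩)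
  rw [sub_zero]
  exact (not_lt.1 fun h => hxk ⟨hN.trans hxN.le, h⟩).trans_lt hk

theorem one_le_mul_abs_of_mem_exceptionalSet (hR : ∀ k : ℕ, (k : ℝ) ≤ R k) {u : X → ℝ}
    {O x : X} (hx : x ∈ exceptionalSet R u O) {t : ℝ} (hxt : dist x O ≤ t) :
    1 ≤ ((levelIndex R t : ℝ) + 1) * |u x| := by
  obtain ⟨k, hRk, hk⟩ := mem_iUnion.1 hx
  have hkt : (k : ℝ) ≤ levelIndex R t := by exact_mod_cast le_levelIndex hR (hRk.trans hxt)
  rw [div_lt_iff₀ (by positivity)] at hk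
  nlinarith [abs_nonneg (u x)]

theorem levelIndex_dist_eq_subset_compl_ball {a : ℝ} {k : ℕ} (hk : k ≠ 0) (hak : a ≤ (k : ℝ) + 1)
    (O : X) :
    {x | levelIndex R (a * dist x O) = k} ⊆ (ball O (R k / ((k : ℝ) + 1)))ᶜ := by
  intro x (hx : levelIndex R (a * dist x O) = k)
  have hRk : R k ≤ a * dist x O := hx ▸ levelIndex_spec (by omega)
  simp only [mem_compl_iff, mem_ball, not_lt]
  rw [div_le_iff₀ (by positivity)]
  nlinarith [dist_nonneg (x := x) (y := O)]

def levelWeight (R : ℕ → ℝ) (p a : ℝ) (O x : X) : ℝ≥0∞ :=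
  ENNReal.ofReal ((levelIndex R (a * dist x O) : ℝ) + 1) ^ p

variable [MeasurableSpace X] [OpensMeasurableSpace X]

theorem measurable_levelIndex_dist (hR : ∀ k : ℕ, (k : ℝ) ≤ R k) (a : ℝ) (O : X) :
    Measurable fun x => levelIndex R (a * dist x O) :=
  (levelIndex_mono hR).measurable.comp
    (continuous_const.mul (continuous_id.dist continuous_const)).measurable

theorem measurable_levelWeight (hR : ∀ k : ℕ, (k : ℝ) ≤ R k) (p a : ℝ) (O : X) :
    Measurable (levelWeight R p a O) :=
  measurable_from_nat (f := fun k : ℕ => ENNReal.ofReal ((k : ℝ) + 1) ^ p) |>.comp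
    (measurable_levelIndex_dist hR a O)

end Levels

section Radii

variable {X : Type*} [MetricSpace X] [MeasurableSpace X] [OpensMeasurableSpace X]

theorem exists_radii_tail_le (ν : Measure X) [IsFiniteMeasure ν] (O : X) (p : ℝ) :
    ∃ R : ℕ → ℝ, (∀ k : ℕ, (k : ℝ) ≤ R k) ∧ ∀ k : ℕ,
      ENNReal.ofReal ((k : ℝ) + 1) ^ p * ν (ball O (R k / ((k : ℝ) + 1)))ᶜ ≤ 2⁻¹ ^ k := by
  have h : ∀ k : ℕ, ∃ ρ : ℝ, (k : ℝ) ≤ ρ ∧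
      ENNReal.ofReal ((k : ℝ) + 1) ^ p * ν (ball O (ρ / ((k : ℝ) + 1)))ᶜ ≤ 2⁻¹ ^ k := by
    intro k
    have hc : ENNReal.ofReal ((k : ℝ) + 1) ^ p ≠ ⊤ :=
      ENNReal.rpow_ne_top_of_ne_zero (by positivity) ENNReal.ofReal_ne_top
    have hlim : Tendsto (fun ρ : ℝ => ENNReal.ofReal ((k : ℝ) + 1) ^ p *
        ν (ball O (ρ / ((k : ℝ) + 1)))ᶜ) atTop (𝓝 0) := by
      simpa using ENNReal.Tendsto.const_mul ((tendsto_measure_compl_ball_atTop ν O).comp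
        (tendsto_id.atTop_div_const (by positivity))) (Or.inr hc)
    exact ((eventually_ge_atTop (k : ℝ)).and
      (hlim.eventually (eventually_le_nhds
        (ENNReal.pow_pos (ENNReal.inv_pos.2 ENNReal.ofNat_ne_top) k)))).exists
  choose R hR hRν using h
  exact ⟨R, hR, hRν⟩

theorem isFiniteMeasure_withDensity_levelWeight (ν : Measure X) [IsFiniteMeasure ν] {R : ℕ → ℝ}
    (hR : ∀ k : ℕ, (k : ℝ) ≤ R k) {p : ℝ} {O : X}
    (hRν : ∀ k : ℕ, ENNReal.ofReal ((k : ℝ) + 1) ^ p * ν (ball O (R k / ((k : ℝ) + 1)))ᶜ ≤ 2⁻¹ ^ k)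
    (a : ℝ) : IsFiniteMeasure (ν.withDensity (levelWeight R p a O)) := by
  set ν' := ν.withDensity (levelWeight R p a O)
  set L : ℕ → Set X := fun k => {x | levelIndex R (a * dist x O) = k}
  have hL : ∀ k, MeasurableSet (L k) := fun k =>
    measurable_levelIndex_dist hR a O (measurableSet_singleton k)
  have hνL : ∀ k, ν' (L k) = ENNReal.ofReal ((k : ℝ) + 1) ^ p * ν (L k) := by
    intro k
    rw [withDensity_apply _ (hL k), ← setLIntegral_const]
    refine setLIntegral_congr_fun (hL k) fun x (hx : levelIndex R (a * dist x O) = k) => ?_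
    rw [levelWeight, hx]
  have htail : ∀ k : ℕ, 1 ≤ k → a ≤ (k : ℝ) + 1 → ν' (L k) ≤ 2⁻¹ ^ k := by
    intro k hk hak
    rw [hνL]
    exact le_trans (mul_le_mul_right
      (measure_mono (levelIndex_dist_eq_subset_compl_ball (by omega) hak O)) _) (hRν k)
  obtain ⟨k₀, hk₀, hak₀⟩ : ∃ k₀ : ℕ, 1 ≤ k₀ ∧ a ≤ k₀ :=
    ⟨⌈a⌉₊ + 1, by omega, (Nat.le_ceil a).trans (by exact_mod_cast Nat.le_succ _)⟩
  have hak : ∀ k : ℕ, a ≤ ((k + k₀ : ℕ) : ℝ) + 1 := fun k => by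
    push_cast
    linarith [(k.cast_nonneg : (0 : ℝ) ≤ k)]
  constructor
  calc ν' univ ≤ ∑' k, ν' (L k) :=
        (measure_mono fun x _ => mem_iUnion.2 ⟨levelIndex R (a * dist x O), rfl⟩).trans
          (measure_iUnion_le L)
    _ = ∑ k ∈ Finset.range k₀, ν' (L k) + ∑' k, ν' (L (k + k₀)) :=
        ENNReal.summable.sum_add_tsum_nat_add'.symm
    _ ≤ ∑ k ∈ Finset.range k₀, ENNReal.ofReal ((k : ℝ) + 1) ^ p * ν univ + ∑' k, 2⁻¹ ^ k := by
        gcongr with k _ k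
        · rw [hνL]; exact mul_le_mul_right (measure_mono (subset_univ _)) _
        · exact (htail _ (by omega) (hak k)).trans
            (pow_le_pow_of_le_one zero_le (ENNReal.inv_le_one.2 one_le_two) (Nat.le_add_right _ _))
    _ < ⊤ := by
        refine ENNReal.add_lt_top.2 ⟨ENNReal.sum_lt_top.2 fun k _ => ?_, ?_⟩
        · exact ENNReal.mul_lt_top (ENNReal.rpow_ne_top_of_ne_zero (by positivity)
            ENNReal.ofReal_ne_top).lt_top (measure_lt_top ν _)
        · rw [ENNReal.tsum_geometric_two]; exact ENNReal.ofNat_lt_top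

end Radii

section Thin

variable {X : Type*} [MetricSpace X] [MeasurableSpace X] [OpensMeasurableSpace X] {μ : Measure X}
  {cR κ s p : ℝ} {u : X → ℝ} {g : X → ℝ≥0∞} {R : ℕ → ℝ} {O : X}

theorem relCap_exceptionalSet_inter_ann_le
    (hball : ∀ (x : X) (r : ℝ), 0 < r → 0 < μ (ball x r) ∧ μ (ball x r) < ⊤) (hcR1 : cR < 1)
    (hrev : ∀ (x : X) (r : ℝ), 0 < r → μ (ball x r) ≤ ENNReal.ofReal cR * μ (ball x (κ * r)))
    (hκ : 1 < κ) (hs : 0 < s) (hp : 0 < p) (hu : Measurable u) (hg : IsSGradient μ s u g)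
    (hgp : ∫⁻ x, g x ^ p ∂μ < ⊤) (huqc : HajlaszQC μ s p u) (hR : ∀ k : ℕ, (k : ℝ) ≤ R k)
    {Λ r : ℝ} (hΛ : 1 < Λ) (hr : Λ * κ ≤ (Λ - 1) * r) :
    relCap μ s p (exceptionalSet R u O ∩ ann κ O r) (annL κ Λ O r) ≤
      (energyMeasure μ p u g).withDensity (levelWeight R p (κ * Λ) O) (annL κ Λ O r) := by
  set F := annL κ Λ O r
  set K := levelIndex R (κ * r)
  have hF : MeasurableSet F := measurableSet_ball.diff measurableSet_ball
  have hΛ0 : 0 < Λ := zero_lt_one.trans hΛ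
  have hr0 : 0 < r := by
    by_contra! h
    nlinarith [mul_nonpos_of_nonneg_of_nonpos (sub_pos.2 hΛ).le h,
      mul_pos hΛ0 (zero_lt_one.trans hκ)]
  have hdiam : 1 ≤ ENNReal.ofReal (diam F ^ (s * p)) := by
    refine ENNReal.one_le_ofReal.2 (Real.one_le_rpow ?_ (by positivity))
    refine le_trans ?_ (le_diam_annL hball hcR1 hrev hκ.le hΛ hr0 O)
    rw [le_div_iff₀ (by positivity)]
    linarith
  have hcap := relCap_le_of_one_le_mul_abs (E := exceptionalSet R u O ∩ ann κ O r) (F := F)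
    (c := K + 1) hp.le hu hg hgp huqc (by positivity)
    fun x hx => one_le_mul_abs_of_mem_exceptionalSet hR hx.1 (mem_ball.1 hx.2.1).le
  have hweight : ∀ x ∈ F, ENNReal.ofReal ((K : ℝ) + 1) ^ p ≤ levelWeight R p (κ * Λ) O x := by
    intro x hx
    have hxO : r / Λ ≤ dist x O := not_lt.1 hx.2
    rw [div_le_iff₀ hΛ0] at hxO
    have hK : K ≤ levelIndex R (κ * Λ * dist x O) :=
      levelIndex_mono hR (by nlinarith [zero_lt_one.trans hκ])
    exact ENNReal.rpow_le_rpow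
      (ENNReal.ofReal_le_ofReal (by exact_mod_cast Nat.add_le_add_right hK 1)) hp.le
  calc relCap μ s p (exceptionalSet R u O ∩ ann κ O r) F
      ≤ ENNReal.ofReal ((K : ℝ) + 1) ^ p *
          (lpNormP μ p u F / ENNReal.ofReal (diam F ^ (s * p)) + ∫⁻ x in F, g x ^ p ∂μ) := hcap
    _ ≤ ENNReal.ofReal ((K : ℝ) + 1) ^ p * energyMeasure μ p u g F := by
        rw [energyMeasure_apply hu g hF]
        gcongr
        exact ENNReal.div_le_of_le_mul (le_mul_of_one_le_right zero_le hdiam)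
    _ = ∫⁻ _ in F, ENNReal.ofReal ((K : ℝ) + 1) ^ p ∂energyMeasure μ p u g :=
        (setLIntegral_const _ _).symm
    _ ≤ ∫⁻ x in F, levelWeight R p (κ * Λ) O x ∂energyMeasure μ p u g :=
        setLIntegral_mono (measurable_levelWeight hR _ _ _) hweight
    _ = _ := (withDensity_apply _ hF).symm

theorem thinAtInfinity_exceptionalSet
    (hball : ∀ (x : X) (r : ℝ), 0 < r → 0 < μ (ball x r) ∧ μ (ball x r) < ⊤) (hcR1 : cR < 1)
    (hrev : ∀ (x : X) (r : ℝ), 0 < r → μ (ball x r) ≤ ENNReal.ofReal cR * μ (ball x (κ * r)))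
    (hκ : 1 < κ) (hs : 0 < s) (hp : 0 < p) (hu : Measurable u) (hg : IsSGradient μ s u g)
    (hgp : ∫⁻ x, g x ^ p ∂μ < ⊤) (huqc : HajlaszQC μ s p u)
    [IsFiniteMeasure (energyMeasure μ p u g)] (hR : ∀ k : ℕ, (k : ℝ) ≤ R k)
    (hRν : ∀ k : ℕ, ENNReal.ofReal ((k : ℝ) + 1) ^ p *
      energyMeasure μ p u g (ball O (R k / ((k : ℝ) + 1)))ᶜ ≤ 2⁻¹ ^ k) :
    ThinAtInfinity μ s p κ O (exceptionalSet R u O) := by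
  intro Λ hΛ
  have hΛ0 : 0 < Λ := zero_lt_one.trans hΛ
  set ν := (energyMeasure μ p u g).withDensity (levelWeight R p (κ * Λ) O)
  have : IsFiniteMeasure ν := isFiniteMeasure_withDensity_levelWeight _ hR hRν (κ * Λ)
  obtain ⟨C, hC⟩ := pow_unbounded_of_one_lt (Λ * Λ * κ) hκ
  obtain ⟨m₀, hm₀⟩ := pow_unbounded_of_one_lt (Λ * κ / (Λ - 1)) hκ
  rw [div_lt_iff₀ (sub_pos.2 hΛ)] at hm₀
  have hbound : ∀ᶠ m in atTop, ∑' j, relCap μ s p (exceptionalSet R u O ∩ ann κ O (κ ^ (m + j)))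
      (annL κ Λ O (κ ^ (m + j))) ≤ C * ν (ball O (κ ^ m / Λ))ᶜ := by
    filter_upwards [eventually_ge_atTop m₀] with m hm
    refine (ENNReal.tsum_le_tsum fun j => relCap_exceptionalSet_inter_ann_le hball hcR1 hrev hκ hs
      hp hu hg hgp huqc hR hΛ ?_).trans (tsum_measure_annL_le ν hκ hΛ0 hC.le O m)
    have : κ ^ m₀ ≤ κ ^ (m + j) := pow_le_pow_right₀ hκ.le (by omega)
    nlinarith
  have hlim : Tendsto (fun m : ℕ => (C : ℝ≥0∞) * ν (ball O (κ ^ m / Λ))ᶜ) atTop (𝓝 0) := by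
    simpa using ENNReal.Tendsto.const_mul ((tendsto_measure_compl_ball_atTop ν O).comp
      ((tendsto_pow_atTop_atTop_of_one_lt hκ).atTop_div_const hΛ0))
      (Or.inr (ENNReal.natCast_ne_top C))
  exact tendsto_of_tendsto_of_tendsto_of_le_of_le' tendsto_const_nhds hlim
    (.of_forall fun _ => zero_le) hbound

end Thin

variable {X : Type*} [MetricSpace X] [MeasurableSpace X]

theorem statement12_general [BorelSpace X]
    (μ : Measure X)
    (hball : ∀ (x : X) (r : ℝ), 0 < r → 0 < μ (ball x r) ∧ μ (ball x r) < ⊤)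
    (cR κ : ℝ) (hcR1 : cR < 1) (hκ : 1 < κ)
    (hrev : ∀ (x : X) (r : ℝ), 0 < r → μ (ball x r) ≤ ENNReal.ofReal cR * μ (ball x (κ * r)))
    (s p : ℝ) (hs0 : 0 < s) (hp : 0 < p)
    (u : X → ℝ) (hu : MemHomHajlasz μ s p u) (huLp : lpNormP μ p u Set.univ < ⊤)
    (huqc : HajlaszQC μ s p u) :
    ∀ O : X, ∃ E : Set X, ThinAtInfinity μ s p κ O E ∧ TendstoOutside O E u 0 := by
  intro O
  obtain ⟨hum, g, hg, hgp⟩ := hu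
  have := isFiniteMeasure_energyMeasure hum huLp hgp
  obtain ⟨R, hR, hRν⟩ := exists_radii_tail_le (energyMeasure μ p u g) O p
  exact ⟨exceptionalSet R u O,
    thinAtInfinity_exceptionalSet hball hcR1 hrev hκ hs0 hp hum hg hgp huqc hR hRν,
    tendstoOutside_exceptionalSet R u O⟩

/-- Theorem 7.10: if `u ∈ M^{s,p}(X) = Ṁ^{s,p}(X) ∩ L^p(X)` is
`M^{s,p}`-quasicontinuous, then for every basepoint `O` there is an `(s,p)`-thin set
at infinity `E(O)` with `u(x) → 0` as `d(x,O) → ∞` along `X \ E(O)`. -/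
theorem statement12 [BorelSpace X]
    (μ : Measure X) (hcomp : μ.IsComplete)
    (hball : ∀ (x : X) (r : ℝ), 0 < r → 0 < μ (ball x r) ∧ μ (ball x r) < ⊤)
    (hdiam : EMetric.diam (Set.univ : Set X) = ⊤)
    (cμ : ℝ) (hcμ : 1 ≤ cμ)
    (hdoub : ∀ (x : X) (r : ℝ), 0 < r → μ (ball x (2 * r)) ≤ ENNReal.ofReal cμ * μ (ball x r))
    (cR κ : ℝ) (hcR0 : 0 < cR) (hcR1 : cR < 1) (hκ : 1 < κ)
    (hrev : ∀ (x : X) (r : ℝ), 0 < r → μ (ball x r) ≤ ENNReal.ofReal cR * μ (ball x (κ * r)))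
    (s p : ℝ) (hs0 : 0 < s) (hs1 : s ≤ 1) (hp : 0 < p)
    (u : X → ℝ) (hu : MemHomHajlasz μ s p u) (huLp : lpNormP μ p u Set.univ < ⊤)
    (huqc : HajlaszQC μ s p u) :
    ∀ O : X, ∃ E : Set X, ThinAtInfinity μ s p κ O E ∧ TendstoOutside O E u 0 :=
  statement12_general μ hball cR κ hcR1 hκ hrev s p hs0 hp u hu huLp huqc

end Paper
end
end

section
/- Let 0 < s ≤ 1 and 0 < p, q < ∞. Then Ẇ^{s,p}_q(X) ⊂ Ṁ^{s,p}(X), and there is a constant C = C(q, c_μ) > 0 such that ‖u‖_{Ṁ^{s,p}(X)} ≤ C ‖u‖_{Ẇ^{s,p}_q(X)} for all u ∈ Ẇ^{s,p}_q(X). -/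
open MeasureTheory Metric Set Filter
open scoped ENNReal NNReal Topology

noncomputable section
namespace Paper

variable {X : Type*} [MetricSpace X] [MeasurableSpace X]

/-!
For `x ≠ y`, `d = d(x,y)` and `z ∈ B(x,2d)`, the triangle inequality bounds `|u x - u y|^q` by
`2^q (|u x - u z|^q + |u y - u z|^q)`, and since `d(x,z), d(y,z) ≤ 3d` and
`μ(B(y,3d)) ≤ μ(B(x,4d)) ≤ c_μ μ(B(x,2d))`, each term is at most `(3d)^{sq} c_μ μ(B(x,2d))` times
the integrand of the fractional norm at `(x,z)`, resp. `(y,z)`. Integrating in `z` over `B(x,2d)`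
and dividing by `μ(B(x,2d))` shows that `C E(x)^{1/q}` is an `s`-gradient of `u`, where `E(x)` is
the inner integral of the fractional norm; its `L^p` norm is `C ‖u‖_{Ẇ^{s,p}_q}`.

Measurability of `E` (Tonelli on `X × X`) needs `X` to be second countable. This holds because `μ`
is σ-finite and charges every ball, so it admits only countably many disjoint balls.
-/

lemma exists_maximal_isSeparated {Y : Type*} [PseudoEMetricSpace Y] (ε : ℝ≥0∞) :
    ∃ N : Set Y, Maximal (fun N ↦ N ⊆ univ ∧ IsSeparated ε N) N := by
  obtain ⟨N, hN⟩ := zorn_subset {N : Set Y | IsSeparated ε N} fun c hcS hc ↦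
    ⟨⋃₀ c, hc.pairwise_sUnion.2 hcS, fun _ ↦ subset_sUnion_of_mem⟩
  exact ⟨N, by simpa using hN⟩

theorem secondCountableTopology_of_measure_ball_pos [OpensMeasurableSpace X] (μ : Measure X)
    [SFinite μ] (hpos : ∀ (x : X) (r : ℝ), 0 < r → 0 < μ (ball x r)) :
    SecondCountableTopology X := by
  refine secondCountable_of_almost_dense_set fun ε hε ↦ ?_
  obtain ⟨N, hN⟩ := exists_maximal_isSeparated (Y := X) (ENNReal.ofReal ε)
  have hdisj : Pairwise (Function.onFun Disjoint fun y : N ↦ ball (y : X) (ε / 2)) := by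
    intro y y' hyy'
    refine Set.disjoint_left.2 fun z hz hz' ↦ ?_
    have hsep : ENNReal.ofReal ε < edist (y : X) y' :=
      hN.prop.2 y.2 y'.2 (Subtype.coe_ne_coe.2 hyy')
    rw [edist_dist, ENNReal.ofReal_lt_ofReal_iff_of_nonneg hε.le] at hsep
    rw [mem_ball] at hz hz'
    linarith [dist_triangle_left (y : X) y' z]
  have hcount := Measure.countable_meas_pos_of_disjoint_iUnion (μ := μ)
    (fun _ ↦ measurableSet_ball) hdisj
  refine ⟨N, ?_, fun x ↦ ?_⟩
  · simpa [hpos _ _ (half_pos hε), Set.countable_univ_iff, Set.countable_coe_iff] using hcount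
  · obtain ⟨y, hy, hxy⟩ := IsCover.of_maximal_isSeparated hN (mem_univ x)
    exact ⟨y, hy, (edist_le_ofReal hε.le).1 hxy⟩

lemma sigmaFinite_of_measure_ball_lt_top (μ : Measure X)
    (hfin : ∀ (x : X) (r : ℝ), 0 < r → μ (ball x r) < ⊤) : SigmaFinite μ := by
  rcases isEmpty_or_nonempty X with hX | ⟨⟨x₀⟩⟩
  · rw [Measure.eq_zero_of_isEmpty μ]; infer_instance
  · refine Measure.sigmaFinite_of_countable (countable_range fun n : ℕ ↦ ball x₀ (n + 1))
      (forall_mem_range.2 fun n ↦ hfin _ _ (by positivity)) ?_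
    rw [sUnion_range, iUnion_ball_nat_succ]

lemma ENNReal.add_rpow_le_two_rpow_mul (a b : ℝ≥0∞) {r : ℝ} (hr : 0 ≤ r) :
    (a + b) ^ r ≤ 2 ^ r * (a ^ r + b ^ r) := by
  have hmax : (a ⊔ b) ^ r ≤ a ^ r + b ^ r := by
    rcases le_total a b with h | h
    · rw [sup_eq_right.2 h]; exact le_add_self
    · rw [sup_eq_left.2 h]; exact le_self_add
  calc (a + b) ^ r ≤ (2 * (a ⊔ b)) ^ r := by
        gcongr; rw [two_mul]; exact add_le_add le_sup_left le_sup_right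
    _ = 2 ^ r * (a ⊔ b) ^ r := ENNReal.mul_rpow_of_nonneg _ _ hr
    _ ≤ 2 ^ r * (a ^ r + b ^ r) := by gcongr

lemma ENNReal.le_mul_rpow_add_of_rpow_le {a b A e f : ℝ≥0∞} {q : ℝ} (hq : 0 < q)
    (h : a ^ q ≤ b ^ q * A * (e + f)) :
    a ≤ b * ((2 * A) ^ (1 / q) * e ^ (1 / q) + (2 * A) ^ (1 / q) * f ^ (1 / q)) := by
  have hq' : 0 ≤ 1 / q := by positivity
  have hroot : ∀ c : ℝ≥0∞, (c ^ q) ^ (1 / q) = c := fun c ↦ by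
    rw [← ENNReal.rpow_mul, mul_one_div_cancel hq.ne', ENNReal.rpow_one]
  calc a = (a ^ q) ^ (1 / q) := (hroot a).symm
    _ ≤ (b ^ q * A * (e + f)) ^ (1 / q) := by gcongr
    _ = b * A ^ (1 / q) * (e + f) ^ (1 / q) := by
        rw [ENNReal.mul_rpow_of_nonneg _ _ hq', ENNReal.mul_rpow_of_nonneg _ _ hq', hroot]
    _ ≤ b * A ^ (1 / q) * (2 ^ (1 / q) * (e ^ (1 / q) + f ^ (1 / q))) := by
        gcongr; exact ENNReal.add_rpow_le_two_rpow_mul _ _ hq'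
    _ = b * ((2 * A) ^ (1 / q) * e ^ (1 / q) + (2 * A) ^ (1 / q) * f ^ (1 / q)) := by
        rw [ENNReal.mul_rpow_of_nonneg _ _ hq']; ring

lemma lintegral_const_mul_rpow_rpow_rpow {α : Type*} [MeasurableSpace α] (ν : Measure α)
    (f : α → ℝ≥0∞) {C : ℝ≥0∞} (hC : C ≠ ⊤) {p : ℝ} (hp : 0 < p) (q : ℝ) :
    (∫⁻ x, (C * f x ^ (1 / q)) ^ p ∂ν) ^ (1 / p) = C * (∫⁻ x, f x ^ (p / q) ∂ν) ^ (1 / p) := by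
  have hpow : ∀ x, (C * f x ^ (1 / q)) ^ p = C ^ p * f x ^ (p / q) := fun x ↦ by
    rw [ENNReal.mul_rpow_of_nonneg _ _ hp.le, ← ENNReal.rpow_mul, one_div_mul_eq_div]
  simp_rw [hpow]
  rw [lintegral_const_mul' _ _ (ENNReal.rpow_ne_top_of_nonneg hp.le hC),
    ENNReal.mul_rpow_of_nonneg _ _ (by positivity), ← ENNReal.rpow_mul,
    mul_one_div_cancel hp.ne', ENNReal.rpow_one]

section FractionalEnergy

variable (μ : Measure X) (s q : ℝ) (u : X → ℝ)

def fracKernel (x y : X) : ℝ≥0∞ :=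
  ENNReal.ofReal |u x - u y| ^ q / (ENNReal.ofReal (dist x y ^ (s * q)) * μ (ball x (dist x y)))

def fracEnergy (x : X) : ℝ≥0∞ := ∫⁻ y, fracKernel μ s q u x y ∂μ

lemma fracNorm_eq_lintegral_fracEnergy (p : ℝ) :
    fracNorm μ s p q u = (∫⁻ x, fracEnergy μ s q u x ^ (p / q) ∂μ) ^ (1 / p) := rfl

lemma measurable_fracKernel [OpensMeasurableSpace X] [SecondCountableTopology X] [SFinite μ]
    (hu : Measurable u) : Measurable (Function.uncurry (fracKernel μ s q u)) := by
  have hball : Measurable fun w : X × X ↦ μ (ball w.1 (dist w.1 w.2)) := by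
    have hopen : IsOpen {w : (X × X) × X | dist w.2 w.1.1 < dist w.1.1 w.1.2} :=
      isOpen_lt (by fun_prop) (by fun_prop)
    exact measurable_measure_prodMk_left hopen.measurableSet
  refine Measurable.div ?_ ((measurable_dist.pow_const _).ennreal_ofReal.mul hball)
  exact ((hu.comp measurable_fst).sub (hu.comp measurable_snd)).abs.ennreal_ofReal.pow_const q

lemma measurable_fracEnergy [OpensMeasurableSpace X] [SecondCountableTopology X] [SFinite μ]
    (hu : Measurable u) : Measurable (fracEnergy μ s q u) :=
  (measurable_fracKernel μ s q u hu).lintegral_prod_right'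

variable {μ s q u}

lemma rpow_abs_sub_le_mul_fracKernel
    (hball : ∀ (x : X) (r : ℝ), 0 < r → 0 < μ (ball x r) ∧ μ (ball x r) < ⊤)
    (hs : 0 ≤ s) (hq : 0 < q) {w z : X} {R : ℝ} {M : ℝ≥0∞}
    (hR : dist w z ≤ R) (hM : μ (ball w (dist w z)) ≤ M) :
    ENNReal.ofReal |u w - u z| ^ q ≤ ENNReal.ofReal (R ^ (s * q)) * M * fracKernel μ s q u w z := by
  rcases eq_or_ne w z with rfl | hwz
  · simp [ENNReal.zero_rpow_of_pos hq]
  have hd : 0 < dist w z := dist_pos.2 hwz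
  have hden0 : ENNReal.ofReal (dist w z ^ (s * q)) * μ (ball w (dist w z)) ≠ 0 :=
    mul_ne_zero (ENNReal.ofReal_pos.2 (Real.rpow_pos_of_pos hd _)).ne' (hball w _ hd).1.ne'
  have hdenT : ENNReal.ofReal (dist w z ^ (s * q)) * μ (ball w (dist w z)) ≠ ⊤ :=
    ENNReal.mul_ne_top ENNReal.ofReal_ne_top (hball w _ hd).2.ne
  calc ENNReal.ofReal |u w - u z| ^ q
      = ENNReal.ofReal (dist w z ^ (s * q)) * μ (ball w (dist w z)) * fracKernel μ s q u w z :=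
        (ENNReal.mul_div_cancel hden0 hdenT).symm
    _ ≤ ENNReal.ofReal (R ^ (s * q)) * M * fracKernel μ s q u w z := by
        gcongr

lemma rpow_abs_sub_le_mul_fracKernel_add
    (hball : ∀ (x : X) (r : ℝ), 0 < r → 0 < μ (ball x r) ∧ μ (ball x r) < ⊤) {cμ : ℝ}
    (hdoub : ∀ (x : X) (r : ℝ), 0 < r → μ (ball x (2 * r)) ≤ ENNReal.ofReal cμ * μ (ball x r))
    (hs : 0 ≤ s) (hq : 0 < q) {x y z : X} (hz : z ∈ ball x (2 * dist x y)) :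
    ENNReal.ofReal |u x - u y| ^ q ≤ 2 ^ q *
      (ENNReal.ofReal ((3 * dist x y) ^ (s * q)) * (ENNReal.ofReal cμ * μ (ball x (2 * dist x y))) *
        (fracKernel μ s q u x z + fracKernel μ s q u y z)) := by
  rw [mem_ball, dist_comm] at hz
  have hd : 0 < dist x y := by linarith [dist_nonneg (x := x) (y := z)]
  have hdoubB := hdoub x (2 * dist x y) (by positivity)
  have hyz : dist y z ≤ 3 * dist x y := by linarith [dist_triangle_left y z x]
  have hx := rpow_abs_sub_le_mul_fracKernel (u := u) hball hs hq
    (by linarith : dist x z ≤ 3 * dist x y)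
    ((measure_mono (ball_subset_ball (by linarith))).trans hdoubB)
  have hy := rpow_abs_sub_le_mul_fracKernel (u := u) hball hs hq hyz
    ((measure_mono ((ball_subset_ball hyz).trans (ball_subset_ball' (by
      rw [dist_comm]; linarith)))).trans hdoubB)
  have htri : ENNReal.ofReal |u x - u y| ≤
      ENNReal.ofReal |u x - u z| + ENNReal.ofReal |u y - u z| := by
    rw [← ENNReal.ofReal_add (abs_nonneg _) (abs_nonneg _), abs_sub_comm (u y)]
    exact ENNReal.ofReal_le_ofReal (abs_sub_le _ _ _)
  calc ENNReal.ofReal |u x - u y| ^ q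
      ≤ (ENNReal.ofReal |u x - u z| + ENNReal.ofReal |u y - u z|) ^ q := by gcongr
    _ ≤ 2 ^ q * (ENNReal.ofReal |u x - u z| ^ q + ENNReal.ofReal |u y - u z| ^ q) :=
      ENNReal.add_rpow_le_two_rpow_mul _ _ hq.le
    _ ≤ _ := by
      gcongr 2 ^ q * ?_
      rw [mul_add]
      exact add_le_add hx hy

lemma rpow_abs_sub_le_fracEnergy [OpensMeasurableSpace X] [SecondCountableTopology X] [SFinite μ]
    (hball : ∀ (x : X) (r : ℝ), 0 < r → 0 < μ (ball x r) ∧ μ (ball x r) < ⊤) {cμ : ℝ}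
    (hdoub : ∀ (x : X) (r : ℝ), 0 < r → μ (ball x (2 * r)) ≤ ENNReal.ofReal cμ * μ (ball x r))
    (hs : 0 ≤ s) (hq : 0 < q) (hu : Measurable u) (x y : X) :
    ENNReal.ofReal |u x - u y| ^ q ≤ ENNReal.ofReal (dist x y ^ s) ^ q *
      (2 ^ q * ENNReal.ofReal (3 ^ (s * q)) * ENNReal.ofReal cμ) *
      (fracEnergy μ s q u x + fracEnergy μ s q u y) := by
  rcases eq_or_ne x y with rfl | hxy
  · simp [ENNReal.zero_rpow_of_pos hq]
  set d := dist x y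
  have hd : 0 < d := dist_pos.2 hxy
  set B := ball x (2 * d)
  set K := ENNReal.ofReal ((3 * d) ^ (s * q)) * (ENNReal.ofReal cμ * μ B) with hK
  have hB := hball x (2 * d) (by positivity)
  have hKtop : K ≠ ⊤ := ENNReal.mul_ne_top ENNReal.ofReal_ne_top
    (ENNReal.mul_ne_top ENNReal.ofReal_ne_top hB.2.ne)
  have hkernel : ∀ w, Measurable (fracKernel μ s q u w) := fun _ ↦
    (measurable_fracKernel μ s q u hu).of_uncurry_left
  have hint : ENNReal.ofReal |u x - u y| ^ q * μ B ≤
      2 ^ q * (K * (fracEnergy μ s q u x + fracEnergy μ s q u y)) := by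
    calc ENNReal.ofReal |u x - u y| ^ q * μ B = ∫⁻ _ in B, ENNReal.ofReal |u x - u y| ^ q ∂μ :=
          (setLIntegral_const _ _).symm
      _ ≤ ∫⁻ z in B, 2 ^ q * (K * (fracKernel μ s q u x z + fracKernel μ s q u y z)) ∂μ :=
          setLIntegral_mono (by fun_prop) fun z hz ↦
            rpow_abs_sub_le_mul_fracKernel_add hball hdoub hs hq hz
      _ ≤ ∫⁻ z, 2 ^ q * (K * (fracKernel μ s q u x z + fracKernel μ s q u y z)) ∂μ :=
          setLIntegral_le_lintegral _ _
      _ = 2 ^ q * (K * (fracEnergy μ s q u x + fracEnergy μ s q u y)) := by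
          rw [lintegral_const_mul' _ _ (by finiteness), lintegral_const_mul' _ _ hKtop,
            lintegral_add_left (hkernel x), fracEnergy, fracEnergy]
  have h3d : ENNReal.ofReal ((3 * d) ^ (s * q)) =
      ENNReal.ofReal (d ^ s) ^ q * ENNReal.ofReal (3 ^ (s * q)) := by
    rw [Real.mul_rpow (by norm_num) hd.le, ENNReal.ofReal_mul (by positivity), Real.rpow_mul hd.le,
      ENNReal.ofReal_rpow_of_nonneg (by positivity) hq.le, mul_comm]
  rw [← ENNReal.mul_le_mul_iff_left hB.1.ne' hB.2.ne]
  refine hint.trans (le_of_eq ?_)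
  rw [hK, h3d]
  ring

lemma isSGradient_fracEnergy [OpensMeasurableSpace X] [SecondCountableTopology X] [SFinite μ]
    (hball : ∀ (x : X) (r : ℝ), 0 < r → 0 < μ (ball x r) ∧ μ (ball x r) < ⊤) {cμ : ℝ}
    (hdoub : ∀ (x : X) (r : ℝ), 0 < r → μ (ball x (2 * r)) ≤ ENNReal.ofReal cμ * μ (ball x r))
    (hs : 0 ≤ s) (hq : 0 < q) (hu : Measurable u) :
    IsSGradient μ s u fun x ↦ (2 * (2 ^ q * ENNReal.ofReal (3 ^ (s * q)) * ENNReal.ofReal cμ)) ^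
      (1 / q) * fracEnergy μ s q u x ^ (1 / q) :=
  ⟨((measurable_fracEnergy μ s q u hu).pow_const _).const_mul _, ∅, measure_empty,
    fun x _ y _ ↦ ENNReal.le_mul_rpow_add_of_rpow_le hq
      (rpow_abs_sub_le_fracEnergy hball hdoub hs hq hu x y)⟩

end FractionalEnergy

theorem statement17_general [BorelSpace X]
    (μ : Measure X)
    (hball : ∀ (x : X) (r : ℝ), 0 < r → 0 < μ (ball x r) ∧ μ (ball x r) < ⊤)
    (cμ : ℝ) (hcμ : 1 ≤ cμ)
    (hdoub : ∀ (x : X) (r : ℝ), 0 < r → μ (ball x (2 * r)) ≤ ENNReal.ofReal cμ * μ (ball x r))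
    (s p q : ℝ) (hs0 : 0 < s) (hp : 0 < p) (hq : 0 < q) :
    ∃ C : ℝ≥0∞, 0 < C ∧ C < ⊤ ∧
      ∀ u : X → ℝ, Measurable u → fracNorm μ s p q u < ⊤ →
        MemHomHajlasz μ s p u ∧
        hajlaszSeminorm μ s p u ≤ C * fracNorm μ s p q u := by
  have := sigmaFinite_of_measure_ball_lt_top μ fun x r hr ↦ (hball x r hr).2
  have := secondCountableTopology_of_measure_ball_pos μ fun x r hr ↦ (hball x r hr).1
  set C := (2 * (2 ^ q * ENNReal.ofReal (3 ^ (s * q)) * ENNReal.ofReal cμ)) ^ (1 / q)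
  have hC0 : 0 < C := by
    have hcμ0 : 0 < ENNReal.ofReal cμ := ENNReal.ofReal_pos.2 (by linarith)
    have h30 : 0 < ENNReal.ofReal (3 ^ (s * q)) := ENNReal.ofReal_pos.2 (by positivity)
    exact ENNReal.rpow_pos (by positivity) (by finiteness)
  have hCtop : C < ⊤ := ENNReal.rpow_lt_top_of_nonneg (by positivity) (by finiteness)
  refine ⟨C, hC0, hCtop, fun u hu hfin ↦ ?_⟩
  have hg := isSGradient_fracEnergy hball hdoub hs0.le hq hu
  have hnorm := lintegral_const_mul_rpow_rpow_rpow μ (fracEnergy μ s q u) hCtop.ne hp q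
  rw [← fracNorm_eq_lintegral_fracEnergy] at hnorm
  refine ⟨⟨hu, _, hg, ?_⟩, hnorm ▸ iInf₂_le _ hg⟩
  exact (ENNReal.rpow_lt_top_iff_of_pos (by positivity)).1 (hnorm ▸ ENNReal.mul_lt_top hCtop hfin)

/-- Lemma 9.2: the embedding `Ẇ^{s,p}_q(X) ⊆ Ṁ^{s,p}(X)` is bounded:
there is `C = C(q, c_μ) > 0` such that every measurable `u` with finite
`Ẇ^{s,p}_q`-quasinorm belongs to `Ṁ^{s,p}(X)` with
`‖u‖_{Ṁ^{s,p}} ≤ C ‖u‖_{Ẇ^{s,p}_q}`. -/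
theorem statement17 [BorelSpace X]
    (μ : Measure X) (hcomp : μ.IsComplete)
    (hball : ∀ (x : X) (r : ℝ), 0 < r → 0 < μ (ball x r) ∧ μ (ball x r) < ⊤)
    (hdiam : EMetric.diam (Set.univ : Set X) = ⊤)
    (cμ : ℝ) (hcμ : 1 ≤ cμ)
    (hdoub : ∀ (x : X) (r : ℝ), 0 < r → μ (ball x (2 * r)) ≤ ENNReal.ofReal cμ * μ (ball x r))
    (cR κ : ℝ) (hcR0 : 0 < cR) (hcR1 : cR < 1) (hκ : 1 < κ)
    (hrev : ∀ (x : X) (r : ℝ), 0 < r → μ (ball x r) ≤ ENNReal.ofReal cR * μ (ball x (κ * r)))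
    (s p q : ℝ) (hs0 : 0 < s) (hs1 : s ≤ 1) (hp : 0 < p) (hq : 0 < q) :
    ∃ C : ℝ≥0∞, 0 < C ∧ C < ⊤ ∧
      ∀ u : X → ℝ, Measurable u → fracNorm μ s p q u < ⊤ →
        MemHomHajlasz μ s p u ∧
        hajlaszSeminorm μ s p u ≤ C * fracNorm μ s p q u :=
  statement17_general μ hball cμ hcμ hdoub s p q hs0 hp hq

end Paper
end
end

section
/- Let 0 < s ≤ 1 and 0 < p, q < ∞. Then there exists a constant C = C(p, q, c_μ) > 0 such that for every set E ⊂ X, Cap_{M^{s,p}}(E) ≤ C · Cap_{W^{s,p}_q}(E). -/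
/-!
If `u ∈ Ẇ^{s,p}_q` and `I x = ∫ |u x - u y|^q / (d(x,y)^{sq} μ(B(x, d(x,y)))) dμ(y)`, then
`c · I^{1/q}` is an `s`-gradient of `u`: averaging
`|u x - u y|^q ≤ 2^q (|u x - u z|^q + |u y - u z|^q)` over `z ∈ B(x, 2 d(x,y))`, and comparing
that ball with `B(x, d(x,z))` and `B(y, d(y,z))` by doubling, bounds `|u x - u y|^q` by a
multiple of `d(x,y)^{sq} (I x + I y)`. As `‖c · I^{1/q}‖_p = c ‖u‖_{Ẇ^{s,p}_q}`, every test
function for `Cap_{W^{s,p}_q}(E)` is one for `Cap_{M^{s,p}}(E)` with comparable norm.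

The measurability of `I` needs `X` to be separable, which doubling provides: a ball contains
only boundedly many disjoint balls of a fixed smaller radius.
-/

open MeasureTheory Metric Set Filter
open scoped ENNReal NNReal Topology

noncomputable section
namespace Paper

variable {X : Type*} [MetricSpace X] [MeasurableSpace X]

def PosFiniteOnBalls (μ : Measure X) : Prop :=
  ∀ (x : X) (r : ℝ), 0 < r → 0 < μ (ball x r) ∧ μ (ball x r) < ⊤

def IsDoublingWith (μ : Measure X) (C : ℝ≥0∞) : Prop :=
  ∀ (x : X) (r : ℝ), 0 < r → μ (ball x (2 * r)) ≤ C * μ (ball x r)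

section Doubling

variable {μ : Measure X} {C : ℝ≥0∞}

lemma measure_ball_two_pow_mul_le (hdoub : IsDoublingWith μ C) (x : X) {r : ℝ} (hr : 0 < r)
    (k : ℕ) :
    μ (ball x (2 ^ k * r)) ≤ C ^ k * μ (ball x r) := by
  induction k with
  | zero => simp
  | succ k ih =>
    calc μ (ball x (2 ^ (k + 1) * r)) = μ (ball x (2 * (2 ^ k * r))) := by ring_nf
      _ ≤ C * μ (ball x (2 ^ k * r)) := hdoub x _ (by positivity)
      _ ≤ C * (C ^ k * μ (ball x r)) := by gcongr
      _ = C ^ (k + 1) * μ (ball x r) := by ring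

lemma exists_pos_le_measure_ball (hC : C ≠ ⊤) (hdoub : IsDoublingWith μ C)
    (x₀ : X) {R ε : ℝ} (hR : 0 < μ (ball x₀ R)) (hε : 0 < ε) :
    ∃ δ : ℝ≥0∞, 0 < δ ∧ ∀ y ∈ ball x₀ R, δ ≤ μ (ball y ε) := by
  obtain ⟨k, hk⟩ := pow_unbounded_of_one_lt (2 * R / ε) (by norm_num : (1 : ℝ) < 2)
  have hCk : C ^ k ≠ ⊤ := ENNReal.pow_ne_top hC
  refine ⟨μ (ball x₀ R) / C ^ k, ENNReal.div_pos hR.ne' hCk, fun y hy => ?_⟩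
  refine ENNReal.div_le_of_le_mul' ?_
  have hsub : ball x₀ R ⊆ ball y (2 ^ k * ε) := by
    have : 2 * R < 2 ^ k * ε := by rwa [div_lt_iff₀ hε] at hk
    refine ball_subset_ball' ?_
    rw [mem_ball] at hy
    linarith [dist_comm x₀ y]
  exact (measure_mono hsub).trans (measure_ball_two_pow_mul_le hdoub y hε k)

lemma encard_mul_le_measure_of_isSeparated [OpensMeasurableSpace X] {ε : ℝ≥0} {C S : Set X}
    {δ : ℝ≥0∞} (hsep : IsSeparated (ε : ℝ≥0∞) C) (hδ : ∀ y ∈ C, δ ≤ μ (ball y (ε / 2)))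
    (hS : ∀ y ∈ C, ball y (ε / 2) ⊆ S) :
    C.encard * δ ≤ μ S := by
  have hdisj : Pairwise (Function.onFun Disjoint fun y : C => ball (y : X) (ε / 2)) := by
    rintro ⟨y, hy⟩ ⟨y', hy'⟩ hne
    have hlt : (ε : ℝ≥0∞) < edist y y' := hsep hy hy' (Subtype.coe_ne_coe.mpr hne)
    rw [edist_dist, ← ENNReal.ofReal_coe_nnreal] at hlt
    have hdist : (ε : ℝ) < dist y y' := (ENNReal.ofReal_lt_ofReal_iff_of_nonneg ε.2).1 hlt
    exact ball_disjoint_ball (show ε / 2 + ε / 2 ≤ dist y y' by linarith)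
  calc C.encard * δ = ∑' _ : C, δ := (ENNReal.tsum_set_const C δ).symm
    _ ≤ ∑' y : C, μ (ball (y : X) (ε / 2)) := ENNReal.tsum_le_tsum fun y => hδ y y.2
    _ ≤ μ (⋃ y : C, ball (y : X) (ε / 2)) :=
      tsum_meas_le_meas_iUnion_of_disjoint μ (fun _ => measurableSet_ball) hdisj
    _ ≤ μ S := measure_mono (iUnion_subset fun y => hS y y.2)

lemma totallyBounded_ball_of_doubling [OpensMeasurableSpace X] (hC : C ≠ ⊤)
    (hball : PosFiniteOnBalls μ) (hdoub : IsDoublingWith μ C) (x₀ : X) (R : ℝ) :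
    TotallyBounded (ball x₀ R) := by
  rcases le_or_gt R 0 with hR | hR
  · simp [ball_eq_empty.2 hR]
  rw [Metric.totallyBounded_iff]
  intro ε hε
  set ε' : ℝ≥0 := (ε / 2).toNNReal
  have hε' : (ε' : ℝ) = ε / 2 := Real.coe_toNNReal _ (by positivity)
  obtain ⟨δ, hδ, hδle⟩ := exists_pos_le_measure_ball hC hdoub x₀ (hball x₀ R hR).1
    (show 0 < (ε' : ℝ) / 2 by rw [hε']; positivity)
  have hpack : packingNumber ε' (ball x₀ R) ≠ ⊤ := by
    have hM := (hball x₀ (R + ε') (by positivity)).2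
    obtain ⟨N, hN⟩ := ENNReal.exists_nat_gt (ENNReal.div_lt_top hM.ne hδ.ne').ne
    refine ne_top_of_le_ne_top (ENat.natCast_ne_top N) (iSup₂_le fun S hS => iSup_le fun hsep => ?_)
    have hmul := encard_mul_le_measure_of_isSeparated (S := ball x₀ (R + ε')) hsep
      (fun y hy => hδle y (hS hy)) fun y hy =>
        ball_subset_ball' (by linarith [mem_ball.1 (hS hy), (ε'.2 : (0 : ℝ) ≤ ε')])
    rw [← ENat.toENNReal_le]
    exact (((ENNReal.le_div_iff_mul_le (Or.inl hδ.ne') (Or.inr hM.ne)).2 hmul).trans hN.le)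
  refine ⟨maximalSeparatedSet ε' (ball x₀ R),
    Set.encard_ne_top_iff.mp (by rwa [encard_maximalSeparatedSet hpack]), ?_⟩
  refine (isCover_iff_subset_iUnion_closedBall.1 (isCover_maximalSeparatedSet hpack)).trans ?_
  exact iUnion₂_mono fun y _ => closedBall_subset_ball (by linarith)

lemma secondCountableTopology_of_totallyBounded_ball {Y : Type*} [PseudoMetricSpace Y]
    (h : ∀ (y : Y) (R : ℝ), TotallyBounded (ball y R)) : SecondCountableTopology Y := by
  rcases isEmpty_or_nonempty Y with hY | ⟨⟨y₀⟩⟩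
  · infer_instance
  have : TopologicalSpace.SeparableSpace Y := by
    rw [← TopologicalSpace.isSeparable_univ_iff, ← iUnion_ball_nat y₀]
    exact .iUnion fun n => (h y₀ n).isSeparable
  exact UniformSpace.secondCountable_of_separable Y

end Doubling

section Fractional

variable {μ : Measure X} {s p q : ℝ} {u : X → ℝ}

def fracInner (μ : Measure X) (s q : ℝ) (u : X → ℝ) (x : X) : ℝ≥0∞ :=
  ∫⁻ y, ENNReal.ofReal |u x - u y| ^ q /
    (ENNReal.ofReal (dist x y ^ (s * q)) * μ (ball x (dist x y))) ∂μ

lemma fracNorm_eq_fracInner :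
    fracNorm μ s p q u = (∫⁻ x, fracInner μ s q u x ^ (p / q) ∂μ) ^ (1 / p) := rfl

lemma measurable_measure_ball_dist [OpensMeasurableSpace X] [SecondCountableTopology X]
    [SFinite μ] : Measurable fun z : X × X => μ (ball z.1 (dist z.1 z.2)) :=
  measurable_measure_prodMk_left (ν := μ)
    (s := {w : (X × X) × X | dist w.2 w.1.1 < dist w.1.1 w.1.2})
    (measurableSet_lt (by fun_prop) (by fun_prop))

lemma measurable_fracInner [OpensMeasurableSpace X] [SecondCountableTopology X] [SFinite μ]
    (hu : Measurable u) : Measurable (fracInner μ s q u) := by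
  refine Measurable.lintegral_prod_right' (f := fun z : X × X =>
    ENNReal.ofReal |u z.1 - u z.2| ^ q /
      (ENNReal.ofReal (dist z.1 z.2 ^ (s * q)) * μ (ball z.1 (dist z.1 z.2)))) ?_
  exact (by fun_prop : Measurable fun z : X × X => ENNReal.ofReal |u z.1 - u z.2| ^ q).div
    ((by fun_prop : Measurable fun z : X × X => ENNReal.ofReal (dist z.1 z.2 ^ (s * q))).mul
      measurable_measure_ball_dist)

lemma setLIntegral_rpow_abs_sub_le_mul_fracInner (hball : PosFiniteOnBalls μ)
    (hs : 0 ≤ s) (hq : 0 < q) (x : X) {R : ℝ} (hR : 0 < R) {A : Set X} (hA : MeasurableSet A)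
    (hAR : A ⊆ ball x R) :
    ∫⁻ z in A, ENNReal.ofReal |u x - u z| ^ q ∂μ ≤
      ENNReal.ofReal (R ^ (s * q)) * μ (ball x R) * fracInner μ s q u x := by
  set D := ENNReal.ofReal (R ^ (s * q)) * μ (ball x R)
  have hpt : ∀ z ∈ A, ENNReal.ofReal |u x - u z| ^ q ≤ D * (ENNReal.ofReal |u x - u z| ^ q /
      (ENNReal.ofReal (dist x z ^ (s * q)) * μ (ball x (dist x z)))) := by
    intro z hz
    rcases eq_or_ne x z with rfl | hxz
    · simp [ENNReal.zero_rpow_of_pos hq]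
    have hd : 0 < dist x z := dist_pos.2 hxz
    have hdR : dist x z ≤ R := by
      rw [dist_comm]; exact (mem_ball.1 (hAR hz)).le
    obtain ⟨hpos, hfin⟩ := hball x _ hd
    have hDz0 : ENNReal.ofReal (dist x z ^ (s * q)) * μ (ball x (dist x z)) ≠ 0 :=
      mul_ne_zero (ENNReal.ofReal_pos.2 (by positivity)).ne' hpos.ne'
    have hDztop : ENNReal.ofReal (dist x z ^ (s * q)) * μ (ball x (dist x z)) ≠ ⊤ :=
      ENNReal.mul_ne_top ENNReal.ofReal_ne_top hfin.ne
    calc ENNReal.ofReal |u x - u z| ^ q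
        = (ENNReal.ofReal (dist x z ^ (s * q)) * μ (ball x (dist x z))) *
          (ENNReal.ofReal |u x - u z| ^ q /
            (ENNReal.ofReal (dist x z ^ (s * q)) * μ (ball x (dist x z)))) :=
          (ENNReal.mul_div_cancel hDz0 hDztop).symm
      _ ≤ D * _ := by
          gcongr
          exact mul_le_mul'
            (ENNReal.ofReal_le_ofReal (Real.rpow_le_rpow dist_nonneg hdR (by positivity)))
            (measure_mono (ball_subset_ball hdR))
  calc ∫⁻ z in A, ENNReal.ofReal |u x - u z| ^ q ∂μ
      ≤ ∫⁻ z in A, D * (ENNReal.ofReal |u x - u z| ^ q /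
          (ENNReal.ofReal (dist x z ^ (s * q)) * μ (ball x (dist x z)))) ∂μ :=
        setLIntegral_mono' hA hpt
    _ = D * ∫⁻ z in A, ENNReal.ofReal |u x - u z| ^ q /
          (ENNReal.ofReal (dist x z ^ (s * q)) * μ (ball x (dist x z))) ∂μ :=
        lintegral_const_mul' _ _ (ENNReal.mul_ne_top ENNReal.ofReal_ne_top (hball x R hR).2.ne)
    _ ≤ D * fracInner μ s q u x := by
        gcongr
        exact setLIntegral_le_lintegral A _

lemma rpow_abs_sub_le_mul_fracInner [OpensMeasurableSpace X]
    (hball : PosFiniteOnBalls μ) {C : ℝ≥0∞} (hdoub : IsDoublingWith μ C)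
    (hu : Measurable u) (hs : 0 ≤ s) (hq : 0 < q) {x y : X} (hxy : x ≠ y) :
    ENNReal.ofReal |u x - u y| ^ q ≤ 2 ^ q * C * ENNReal.ofReal ((3 * dist x y) ^ (s * q)) *
      (fracInner μ s q u x + fracInner μ s q u y) := by
  set r := dist x y
  have hr : 0 < r := dist_pos.2 hxy
  set A := ball x (2 * r)
  obtain ⟨hA0, hAtop⟩ := hball x (2 * r) (by positivity)
  have hlocal : ∀ w, dist x w ≤ r → ∫⁻ z in A, ENNReal.ofReal |u w - u z| ^ q ∂μ ≤
      ENNReal.ofReal ((3 * r) ^ (s * q)) * (C * μ A) * fracInner μ s q u w := by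
    intro w hw
    have hAw : A ⊆ ball w (3 * r) := ball_subset_ball' (by linarith)
    have hμ : μ (ball w (3 * r)) ≤ C * μ A :=
      (measure_mono (ball_subset_ball' (by linarith [dist_comm x w]))).trans
        (hdoub x (2 * r) (by positivity))
    calc ∫⁻ z in A, ENNReal.ofReal |u w - u z| ^ q ∂μ
        ≤ ENNReal.ofReal ((3 * r) ^ (s * q)) * μ (ball w (3 * r)) * fracInner μ s q u w :=
          setLIntegral_rpow_abs_sub_le_mul_fracInner hball hs hq w (by positivity)
            measurableSet_ball hAw
      _ ≤ _ := by gcongr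
  have htri : ∀ z, ENNReal.ofReal |u x - u y| ^ q ≤
      2 ^ q * (ENNReal.ofReal |u x - u z| ^ q + ENNReal.ofReal |u y - u z| ^ q) := by
    intro z
    refine le_trans ?_ (ENNReal.add_rpow_le_two_rpow_mul_rpow_add_rpow _ _ hq.le)
    gcongr
    rw [← ENNReal.ofReal_add (abs_nonneg _) (abs_nonneg _)]
    exact ENNReal.ofReal_le_ofReal ((abs_sub_le _ (u z) _).trans_eq (by rw [abs_sub_comm (u z)]))
  have h2q : (2 : ℝ≥0∞) ^ q ≠ ⊤ := ENNReal.rpow_ne_top_of_nonneg hq.le ENNReal.ofNat_ne_top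
  have havg : μ A * ENNReal.ofReal |u x - u y| ^ q ≤
      μ A * (2 ^ q * C * ENNReal.ofReal ((3 * r) ^ (s * q)) *
        (fracInner μ s q u x + fracInner μ s q u y)) :=
    calc μ A * ENNReal.ofReal |u x - u y| ^ q
        = ∫⁻ _ in A, ENNReal.ofReal |u x - u y| ^ q ∂μ := by rw [setLIntegral_const, mul_comm]
      _ ≤ ∫⁻ z in A, 2 ^ q * (ENNReal.ofReal |u x - u z| ^ q + ENNReal.ofReal |u y - u z| ^ q) ∂μ :=
          lintegral_mono htri
      _ = 2 ^ q * (∫⁻ z in A, ENNReal.ofReal |u x - u z| ^ q ∂μ +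
            ∫⁻ z in A, ENNReal.ofReal |u y - u z| ^ q ∂μ) := by
          rw [lintegral_const_mul' _ _ h2q, lintegral_add_left (by fun_prop)]
      _ ≤ 2 ^ q * (ENNReal.ofReal ((3 * r) ^ (s * q)) * (C * μ A) * fracInner μ s q u x +
            ENNReal.ofReal ((3 * r) ^ (s * q)) * (C * μ A) * fracInner μ s q u y) := by
          gcongr
          exacts [hlocal x (by simp [hr.le]), hlocal y le_rfl]
      _ = _ := by ring
  exact (ENNReal.mul_le_mul_iff_right hA0.ne' hAtop.ne).1 havg

lemma isSGradient_of_rpow_le (hq : 0 < q) {I : X → ℝ≥0∞} (hI : Measurable I) {K : ℝ≥0∞}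
    (h : ∀ x y, x ≠ y → ENNReal.ofReal |u x - u y| ^ q ≤
      K * ENNReal.ofReal (dist x y ^ s) ^ q * (I x + I y)) :
    IsSGradient μ s u fun x => (2 * K) ^ (1 / q) * I x ^ (1 / q) := by
  refine ⟨by fun_prop, ∅, measure_empty, fun x _ y _ => ?_⟩
  rcases eq_or_ne x y with rfl | hxy
  · simp
  have hq' : 0 ≤ 1 / q := by positivity
  calc ENNReal.ofReal |u x - u y|
      = (ENNReal.ofReal |u x - u y| ^ q) ^ (1 / q) := by
        rw [← ENNReal.rpow_mul, mul_one_div_cancel hq.ne', ENNReal.rpow_one]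
    _ ≤ (K * ENNReal.ofReal (dist x y ^ s) ^ q * (I x + I y)) ^ (1 / q) := by
        gcongr
        exact h x y hxy
    _ = K ^ (1 / q) * ENNReal.ofReal (dist x y ^ s) * (I x + I y) ^ (1 / q) := by
        rw [ENNReal.mul_rpow_of_nonneg _ _ hq', ENNReal.mul_rpow_of_nonneg _ _ hq',
          ← ENNReal.rpow_mul, mul_one_div_cancel hq.ne', ENNReal.rpow_one]
    _ ≤ K ^ (1 / q) * ENNReal.ofReal (dist x y ^ s) *
          (2 ^ (1 / q) * (I x ^ (1 / q) + I y ^ (1 / q))) := by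
        gcongr
        exact ENNReal.add_rpow_le_two_rpow_mul_rpow_add_rpow _ _ hq'
    _ = ENNReal.ofReal (dist x y ^ s) *
          ((2 * K) ^ (1 / q) * I x ^ (1 / q) + (2 * K) ^ (1 / q) * I y ^ (1 / q)) := by
        rw [ENNReal.mul_rpow_of_nonneg _ _ hq']
        ring

lemma isSGradient_fracInner [OpensMeasurableSpace X] [SecondCountableTopology X] [SFinite μ]
    (hball : PosFiniteOnBalls μ) {C : ℝ≥0∞} (hdoub : IsDoublingWith μ C)
    (hu : Measurable u) (hs : 0 ≤ s) (hq : 0 < q) :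
    IsSGradient μ s u fun x => (2 * (2 ^ q * C * ENNReal.ofReal (3 ^ (s * q)))) ^ (1 / q) *
      fracInner μ s q u x ^ (1 / q) := by
  refine isSGradient_of_rpow_le hq (measurable_fracInner hu) fun x y hxy => ?_
  have hsplit : ENNReal.ofReal ((3 * dist x y) ^ (s * q)) =
      ENNReal.ofReal (3 ^ (s * q)) * ENNReal.ofReal (dist x y ^ s) ^ q := by
    rw [Real.mul_rpow (by norm_num) dist_nonneg, ENNReal.ofReal_mul (by positivity),
      ENNReal.ofReal_rpow_of_nonneg (by positivity) hq.le, ← Real.rpow_mul dist_nonneg]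
  calc ENNReal.ofReal |u x - u y| ^ q
      ≤ 2 ^ q * C * ENNReal.ofReal ((3 * dist x y) ^ (s * q)) *
          (fracInner μ s q u x + fracInner μ s q u y) :=
        rpow_abs_sub_le_mul_fracInner hball hdoub hu hs hq hxy
    _ = _ := by rw [hsplit]; ring

end Fractional

lemma lintegral_const_mul_rpow_one_div_rpow {α : Type*} [MeasurableSpace α] (ν : Measure α)
    {c : ℝ≥0∞} (hc : c ≠ ⊤) {p : ℝ} (hp : 0 ≤ p) (q : ℝ) (I : α → ℝ≥0∞) :
    ∫⁻ x, (c * I x ^ (1 / q)) ^ p ∂ν = c ^ p * ∫⁻ x, I x ^ (p / q) ∂ν := by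
  simp_rw [ENNReal.mul_rpow_of_nonneg _ _ hp, ← ENNReal.rpow_mul, one_div_mul_eq_div]
  exact lintegral_const_mul' _ _ (ENNReal.rpow_ne_top_of_nonneg hp hc)

section Capacity

variable {μ : Measure X} {s p q : ℝ} {u : X → ℝ}

lemma memHomHajlasz_and_hajlaszNorm_le (hp : 0 < p) {c : ℝ≥0∞} (hc : c ≠ ⊤)
    (hg : IsSGradient μ s u fun x => c * fracInner μ s q u x ^ (1 / q))
    (hu : MemFrac μ s p q u) :
    MemHomHajlasz μ s p u ∧ hajlaszNorm μ s p u ≤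
      max 1 c * (lpNormP μ p u univ ^ (1 / p) + fracNorm μ s p q u) := by
  have hint := lintegral_const_mul_rpow_one_div_rpow μ hc hp.le q (fracInner μ s q u)
  have hfin : ∫⁻ x, fracInner μ s q u x ^ (p / q) ∂μ < ⊤ := by
    have := hu.2
    rwa [fracNorm_eq_fracInner, ENNReal.rpow_lt_top_iff_of_pos (by positivity)] at this
  refine ⟨⟨hu.1, _, hg, hint ▸ ENNReal.mul_lt_top
    (ENNReal.rpow_lt_top_of_nonneg hp.le hc) hfin⟩, ?_⟩
  have hsemi : hajlaszSeminorm μ s p u ≤ c * fracNorm μ s p q u := by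
    refine (iInf₂_le _ hg).trans_eq ?_
    rw [hint, fracNorm_eq_fracInner, ENNReal.mul_rpow_of_nonneg _ _ (by positivity),
      ← ENNReal.rpow_mul, mul_one_div_cancel hp.ne', ENNReal.rpow_one]
  rw [hajlaszNorm, mul_add]
  gcongr
  · exact le_mul_of_one_le_left' (le_max_left _ _)
  · exact hsemi.trans (by gcongr; exact le_max_right _ _)

lemma hajlaszCapacity_le_mul_fracCapacity (hp : 0 ≤ p) {M : ℝ≥0∞} (hM0 : M ≠ 0) (hMtop : M ≠ ⊤)
    (h : ∀ u, MemFrac μ s p q u → MemHomHajlasz μ s p u ∧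
      hajlaszNorm μ s p u ≤ M * (lpNormP μ p u univ ^ (1 / p) + fracNorm μ s p q u))
    (E : Set X) :
    hajlaszCapacity μ s p E ≤ M ^ p * fracCapacity μ s p q E := by
  have hMp0 : M ^ p ≠ 0 := (ENNReal.rpow_pos (pos_iff_ne_zero.2 hM0) hMtop).ne'
  have hMptop : M ^ p ≠ ⊤ := ENNReal.rpow_ne_top_of_nonneg hp hMtop
  rw [fracCapacity, ENNReal.mul_iInf_of_ne hMp0 hMptop]
  refine le_iInf fun u => ?_
  rw [ENNReal.mul_iInf_of_ne hMp0 hMptop]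
  refine le_iInf fun ⟨hfrac, hlp, hU⟩ => ?_
  obtain ⟨hmem, hnorm⟩ := h u hfrac
  calc hajlaszCapacity μ s p E ≤ hajlaszNorm μ s p u ^ p := iInf₂_le u ⟨hmem, hlp, hU⟩
    _ ≤ (M * (lpNormP μ p u univ ^ (1 / p) + fracNorm μ s p q u)) ^ p := by gcongr
    _ = _ := ENNReal.mul_rpow_of_nonneg _ _ hp

end Capacity

theorem statement18_general [BorelSpace X]
    (μ : Measure X)
    (hball : ∀ (x : X) (r : ℝ), 0 < r → 0 < μ (ball x r) ∧ μ (ball x r) < ⊤)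
    (cμ : ℝ)
    (hdoub : ∀ (x : X) (r : ℝ), 0 < r → μ (ball x (2 * r)) ≤ ENNReal.ofReal cμ * μ (ball x r))
    (s p q : ℝ) (hs0 : 0 < s) (hp : 0 < p) (hq : 0 < q) :
    ∃ C : ℝ≥0∞, 0 < C ∧ C < ⊤ ∧ ∀ E : Set X,
      hajlaszCapacity μ s p E ≤ C * fracCapacity μ s p q E := by
  have : SecondCountableTopology X := secondCountableTopology_of_totallyBounded_ball
    (totallyBounded_ball_of_doubling ENNReal.ofReal_ne_top hball hdoub)
  have : IsLocallyFiniteMeasure μ :=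
    ⟨fun x => ⟨ball x 1, ball_mem_nhds x one_pos, (hball x 1 one_pos).2⟩⟩
  set c := (2 * (2 ^ q * ENNReal.ofReal cμ * ENNReal.ofReal (3 ^ (s * q)))) ^ (1 / q)
  have hc : c ≠ ⊤ := ENNReal.rpow_ne_top_of_nonneg (by positivity) (by finiteness)
  have hM : max 1 c ≠ ⊤ := max_ne_top ENNReal.one_ne_top hc
  refine ⟨max 1 c ^ p, ENNReal.rpow_pos (lt_max_of_lt_left one_pos) hM,
    ENNReal.rpow_lt_top_of_nonneg hp.le hM, hajlaszCapacity_le_mul_fracCapacity hp.le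
      (lt_max_of_lt_left one_pos).ne' hM fun u hu => ?_⟩
  exact memHomHajlasz_and_hajlaszNorm_le hp hc
    (isSGradient_fracInner hball hdoub hu.1 hs0.le hq) hu

/-- Lemma 9.4: there is a constant `C = C(p, q, c_μ) > 0` such that
`Cap_{M^{s,p}}(E) ≤ C · Cap_{W^{s,p}_q}(E)` for every set `E ⊆ X`. -/
theorem statement18 [BorelSpace X]
    (μ : Measure X) (hcomp : μ.IsComplete)
    (hball : ∀ (x : X) (r : ℝ), 0 < r → 0 < μ (ball x r) ∧ μ (ball x r) < ⊤)
    (hdiam : EMetric.diam (Set.univ : Set X) = ⊤)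
    (cμ : ℝ) (hcμ : 1 ≤ cμ)
    (hdoub : ∀ (x : X) (r : ℝ), 0 < r → μ (ball x (2 * r)) ≤ ENNReal.ofReal cμ * μ (ball x r))
    (cR κ : ℝ) (hcR0 : 0 < cR) (hcR1 : cR < 1) (hκ : 1 < κ)
    (hrev : ∀ (x : X) (r : ℝ), 0 < r → μ (ball x r) ≤ ENNReal.ofReal cR * μ (ball x (κ * r)))
    (s p q : ℝ) (hs0 : 0 < s) (hs1 : s ≤ 1) (hp : 0 < p) (hq : 0 < q) :
    ∃ C : ℝ≥0∞, 0 < C ∧ C < ⊤ ∧ ∀ E : Set X,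
      hajlaszCapacity μ s p E ≤ C * fracCapacity μ s p q E :=
  statement18_general μ hball cμ hdoub s p q hs0 hp hq

end Paper
end
end
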